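/- arXiv:2304.08055 — 2 statements merged into one kernel-verified Lean document; each statement's English description precedes it below -/
import Mathlib

section
/- The 7×7 skew-symmetric matrix of linear forms M(x₀,x₁,x₂) = [[0,0,0,x₁,0,0,−x₀],[0,0,0,0,x₂,0,−x₁],[0,0,0,0,0,x₀,−x₂],[−x₁,0,0,0,−x₀,x₂,0],[0,−x₂,0,x₀,0,−x₁,0],[0,0,−x₀,−x₂,x₁,0,0],[x₀,x₁,x₂,0,0,0,0]] has rank exactly 6 for every (x₀,x₁,x₂) ∈ ℂ³ with (x₀,x₁,x₂) ≠ (0,0,0). -/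
/-!
Let `w` be the vector of signed `6 × 6` sub-Pfaffians of `M`, cubic forms in `x` that vanish
simultaneously only at `x = 0`. Then `M w = 0`, and every `v` with `M v = 0` is parallel to `w`:
each `v i * w j - v j * w i` is a combination of the entries of `M v` with quadratic coefficients
(contract `ω ∧ ω ∧ ω` with `v`, where `ω` is the `2`-form of `M`). So for `x ≠ 0` the kernel of
`M` is the line through `w`, and `M` has rank `6`.
-/

open Matrix

theorem Function.exists_smul_eq_of_mul_eq_mul {ι K : Type*} [Field K] {v w : ι → K} (hw : w ≠ 0)
    (h : ∀ i j, v i * w j = v j * w i) : ∃ c : K, c • w = v := by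
  obtain ⟨j, hj⟩ := Function.ne_iff.mp hw
  refine ⟨v j / w j, funext fun i => ?_⟩
  rw [Pi.smul_apply, smul_eq_mul, div_mul_eq_mul_div, div_eq_iff hj, ← h]

theorem Matrix.rank_add_one_eq_card {K m n : Type*} [Field K] [Fintype n] (A : Matrix m n K)
    {w : n → K} (hw : w ≠ 0) (hker : ∀ v, A *ᵥ v = 0 ↔ ∃ c : K, c • w = v) :
    A.rank + 1 = Fintype.card n := by
  have hspan : LinearMap.ker A.mulVecLin = K ∙ w := by
    ext v
    rw [LinearMap.mem_ker, mulVecLin_apply, Submodule.mem_span_singleton, hker]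
  have := LinearMap.finrank_range_add_finrank_ker A.mulVecLin
  rwa [hspan, finrank_span_singleton hw, Module.finrank_fintype_fun_eq_card] at this

section

variable {R : Type*} [CommRing R]

def linearSkewMatrix (x₀ x₁ x₂ : R) : Matrix (Fin 7) (Fin 7) R :=
  !![0, 0, 0, x₁, 0, 0, -x₀;
     0, 0, 0, 0, x₂, 0, -x₁;
     0, 0, 0, 0, 0, x₀, -x₂;
     -x₁, 0, 0, 0, -x₀, x₂, 0;
     0, -x₂, 0, x₀, 0, -x₁, 0;
     0, 0, -x₀, -x₂, x₁, 0, 0;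
     x₀, x₁, x₂, 0, 0, 0, 0]

/-- Up to sign, the Pfaffians of the principal `6 × 6` submatrices of `linearSkewMatrix`. -/
def pfaffianVector (x₀ x₁ x₂ : R) : Fin 7 → R :=
  ![x₂ ^ 3 - x₀ ^ 2 * x₁, x₀ ^ 3 - x₁ ^ 2 * x₂, x₁ ^ 3 - x₀ * x₂ ^ 2,
    x₀ ^ 2 * x₂, x₀ * x₁ ^ 2, x₁ * x₂ ^ 2, x₀ * x₁ * x₂]

theorem linearSkewMatrix_mulVec (x₀ x₁ x₂ : R) (v : Fin 7 → R) :
    linearSkewMatrix x₀ x₁ x₂ *ᵥ v =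
      ![x₁ * v 3 - x₀ * v 6, x₂ * v 4 - x₁ * v 6, x₀ * v 5 - x₂ * v 6,
        -x₁ * v 0 - x₀ * v 4 + x₂ * v 5, -x₂ * v 1 + x₀ * v 3 - x₁ * v 5,
        -x₀ * v 2 - x₂ * v 3 + x₁ * v 4, x₀ * v 0 + x₁ * v 1 + x₂ * v 2] := by
  ext i
  fin_cases i <;>
    simp [linearSkewMatrix, mulVec, dotProduct, Fin.sum_univ_succ, sub_eq_add_neg, add_assoc]

theorem linearSkewMatrix_mulVec_pfaffianVector (x₀ x₁ x₂ : R) :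
    linearSkewMatrix x₀ x₁ x₂ *ᵥ pfaffianVector x₀ x₁ x₂ = 0 := by
  rw [linearSkewMatrix_mulVec]
  ext i
  fin_cases i <;>
    simp only [pfaffianVector, Fin.mk_one, Fin.zero_eta, Fin.reduceFinMk, cons_val_zero,
      cons_val_one, cons_val, Pi.zero_apply] <;> ring

theorem pfaffianVector_ne_zero [IsDomain R] {x₀ x₁ x₂ : R} (h : (x₀, x₁, x₂) ≠ (0, 0, 0)) :
    pfaffianVector x₀ x₁ x₂ ≠ 0 := by
  intro hw
  have h0 := congrFun hw 0
  have h1 := congrFun hw 1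
  have h2 := congrFun hw 2
  have h6 := congrFun hw 6
  simp only [pfaffianVector, cons_val_zero, cons_val_one, cons_val, Pi.zero_apply, mul_eq_zero]
    at h0 h1 h2 h6
  rcases h6 with (rfl | rfl) | rfl <;> simp_all

theorem mul_pfaffianVector_eq_of_mulVec_eq_zero {x₀ x₁ x₂ : R} {v : Fin 7 → R}
    (hv : linearSkewMatrix x₀ x₁ x₂ *ᵥ v = 0) (i j : Fin 7) :
    v i * pfaffianVector x₀ x₁ x₂ j = v j * pfaffianVector x₀ x₁ x₂ i := by
  simp only [linearSkewMatrix_mulVec, cons_eq_zero_iff, sub_eq_zero] at hv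
  obtain ⟨r0, r1, r2, r3, r4, r5, r6, -⟩ := hv
  fin_cases i <;> fin_cases j <;>
    simp only [pfaffianVector, Fin.mk_one, Fin.zero_eta, Fin.reduceFinMk, cons_val_zero,
      cons_val_one, cons_val] <;> grind

end

theorem linearSkewMatrix_rank {K : Type*} [Field K] {x₀ x₁ x₂ : K}
    (h : (x₀, x₁, x₂) ≠ (0, 0, 0)) : (linearSkewMatrix x₀ x₁ x₂).rank = 6 := by
  have hw := pfaffianVector_ne_zero h
  have hker (v : Fin 7 → K) : linearSkewMatrix x₀ x₁ x₂ *ᵥ v = 0 ↔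
      ∃ c : K, c • pfaffianVector x₀ x₁ x₂ = v := by
    refine ⟨fun hv => Function.exists_smul_eq_of_mul_eq_mul hw
      (mul_pfaffianVector_eq_of_mulVec_eq_zero hv), ?_⟩
    rintro ⟨c, rfl⟩
    rw [mulVec_smul, linearSkewMatrix_mulVec_pfaffianVector, smul_zero]
  have := (linearSkewMatrix x₀ x₁ x₂).rank_add_one_eq_card hw hker
  rw [Fintype.card_fin] at this
  omega

theorem stmt1 (x₀ x₁ x₂ : ℂ) (h : (x₀, x₁, x₂) ≠ (0, 0, 0)) :
    (!![0, 0, 0, x₁, 0, 0, -x₀;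
       0, 0, 0, 0, x₂, 0, -x₁;
       0, 0, 0, 0, 0, x₀, -x₂;
       -x₁, 0, 0, 0, -x₀, x₂, 0;
       0, -x₂, 0, x₀, 0, -x₁, 0;
       0, 0, -x₀, -x₂, x₁, 0, 0;
       x₀, x₁, x₂, 0, 0, 0, 0] : Matrix (Fin 7) (Fin 7) ℂ).rank = 6 :=
  linearSkewMatrix_rank h
end

section
/- Let A be the set of pairs (ℓ, q) ∈ V* ⊕ S²V* with V = ℂ³, basis e₀,e₁,e₂, dual basis x₀,x₁,x₂, such that the pairing ℓ(e₀) + ⟨q, e₁e₂⟩ = 0 (i.e. A is the hyperplane orthogonal to (e₀, e₁e₂) in V* ⊕ S²V*, which is 8-dimensional). Suppose Q ∈ S²V and C ∈ S³V are such that for every (ℓ, q) ∈ A, the vector ℓ⌟Q + q⌟C ∈ V is a scalar multiple of a fixed nonzero v ∈ V. Then Q is a multiple of v² and C is a multiple of v³. -/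
/-
A homogeneous form `P` of degree `d` is a multiple of `L ^ d`, `L = ∑ vᵢ xᵢ`, exactly when it is
killed by the derivations `vⱼ ∂ᵢ - vᵢ ∂ⱼ`; by Euler's identity it then even suffices, for `d ≥ 2`,
that every `∂ᵢ P` be a multiple of `L ^ (d - 1)`. Testing the hypothesis on `(xᵢ, 0)` for `i ≠ 0`,
on `(0, xᵢxⱼ)` for `{i, j} ≠ {1, 2}` and on `(x₀, -x₁x₂)` shows that `∂₁Q`, `∂₂Q`, all
`∂ᵢ∂ⱼC` except `∂₁∂₂C`, and `∂₀Q - ∂₁∂₂C` are multiples of `L`. Commuting the derivations past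
the `∂ₖ` then forces `∂₁∂₂C`, hence `∂₀Q`, to be a multiple of `L` too, and the criterion applied
twice to `C` and once to `Q` concludes.
-/

open MvPolynomial

/-- Iterated partial derivative `∏ᵢ ∂ᵢ^{α i}` applied to `T`. -/
noncomputable def monomialDeriv {m : ℕ} (α : Fin m →₀ ℕ) (T : MvPolynomial (Fin m) ℂ) :
    MvPolynomial (Fin m) ℂ :=
  (List.finRange m).foldl (fun p i => (fun q => MvPolynomial.pderiv i q)^[α i] p) T

noncomputable def contract {m : ℕ} (Q T : MvPolynomial (Fin m) ℂ) :
    MvPolynomial (Fin m) ℂ :=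
  Q.support.sum fun α => Q.coeff α • monomialDeriv α T

namespace MvPolynomial

variable {σ R K : Type*} [CommRing R]

theorem pderiv_comm (i j : σ) (p : MvPolynomial σ R) :
    pderiv i (pderiv j p) = pderiv j (pderiv i p) := by
  classical
  have : ⁅pderiv (R := R) i, pderiv (R := R) j⁆ =
      (0 : Derivation R (MvPolynomial σ R) (MvPolynomial σ R)) := by
    refine derivation_ext fun k => ?_
    rw [Derivation.commutator_apply, pderiv_X, pderiv_X]
    simp [Pi.single_apply, apply_ite]
  rw [← sub_eq_zero, ← Derivation.commutator_apply, this, Derivation.zero_apply]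

variable [Field K]

noncomputable def linearForm [Fintype σ] (v : σ → K) : MvPolynomial σ K := ∑ i, v i • X i

/-- The derivative along `v j • eᵢ - v i • eⱼ`, a direction in which `linearForm v` is constant. -/
noncomputable def orthDeriv (v : σ → K) (i j : σ) :
    Derivation K (MvPolynomial σ K) (MvPolynomial σ K) :=
  v j • pderiv i - v i • pderiv j

variable {v : σ → K}

lemma orthDeriv_apply (i j : σ) (p : MvPolynomial σ K) :
    orthDeriv v i j p = v j • pderiv i p - v i • pderiv j p := rfl

lemma orthDeriv_swap (i j : σ) : orthDeriv v j i = -orthDeriv v i j := by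
  rw [orthDeriv, orthDeriv, neg_sub]

lemma orthDeriv_self (i : σ) : orthDeriv v i i = 0 := by
  rw [orthDeriv, sub_self]

lemma forall_orthDeriv_eq_zero_of_lt [LinearOrder σ] {p : MvPolynomial σ K}
    (h : ∀ i j, i < j → orthDeriv v i j p = 0) (i j : σ) : orthDeriv v i j p = 0 := by
  rcases lt_trichotomy i j with hij | rfl | hji
  · exact h i j hij
  · rw [orthDeriv_self, Derivation.zero_apply]
  · rw [orthDeriv_swap, Derivation.neg_apply, h j i hji, neg_zero]

lemma pderiv_orthDeriv (k i j : σ) (p : MvPolynomial σ K) :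
    pderiv k (orthDeriv v i j p) = orthDeriv v i j (pderiv k p) := by
  simp only [orthDeriv_apply, map_sub, Derivation.map_smul, pderiv_comm k]

lemma orthDeriv_pderiv (k l m : σ) (p : MvPolynomial σ K) :
    orthDeriv v k l (pderiv m p) = orthDeriv v m l (pderiv k p) + pderiv l (orthDeriv v k m p) := by
  simp only [orthDeriv_apply, map_sub, Derivation.map_smul, pderiv_comm m k]
  module

protected lemma IsHomogeneous.orthDeriv {p : MvPolynomial σ K} {n : ℕ} (hp : p.IsHomogeneous n)
    (i j : σ) : (orthDeriv v i j p).IsHomogeneous (n - 1) := by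
  rw [orthDeriv_apply, smul_eq_C_mul, smul_eq_C_mul]
  exact ((hp.pderiv (i := i)).C_mul (v j)).sub ((hp.pderiv (i := j)).C_mul (v i))

variable [Fintype σ]

lemma pderiv_linearForm (i : σ) : pderiv i (linearForm v) = C (v i) := by
  classical
  simp [linearForm, pderiv_X, Pi.single_apply, smul_eq_C_mul]

lemma orthDeriv_linearForm (i j : σ) : orthDeriv v i j (linearForm v) = 0 := by
  simp only [orthDeriv_apply, pderiv_linearForm, smul_eq_C_mul, ← map_mul, mul_comm, sub_self]

lemma orthDeriv_eq_zero_of_mem_span (i j : σ) {d : ℕ} {p : MvPolynomial σ K}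
    (hp : p ∈ K ∙ linearForm v ^ d) : orthDeriv v i j p = 0 := by
  obtain ⟨a, rfl⟩ := Submodule.mem_span_singleton.mp hp
  simp [Derivation.leibniz_pow, orthDeriv_linearForm]

variable {p : MvPolynomial σ K}

lemma IsHomogeneous.smul_eq_linearForm_mul_pderiv {n : ℕ} {k : σ} (hp : p.IsHomogeneous n)
    (h : ∀ i, orthDeriv v i k p = 0) : (n * v k) • p = linearForm v * pderiv k p := by
  have hcomm (i : σ) : v k • pderiv i p = v i • pderiv k p := sub_eq_zero.mp (h i)
  calc (n * v k) • p = v k • (n • p) := by rw [mul_comm, mul_smul, Nat.cast_smul_eq_nsmul]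
    _ = ∑ i, X i * (v k • pderiv i p) := by
      simp only [← hp.sum_X_mul_pderiv, Finset.smul_sum, mul_smul_comm]
    _ = linearForm v * pderiv k p := by
      simp only [hcomm, linearForm, Finset.sum_mul, smul_mul_assoc, mul_smul_comm]

variable [CharZero K]

lemma IsHomogeneous.eq_zero_of_forall_pderiv_eq_zero {n : ℕ} (hp : p.IsHomogeneous n)
    (hn : n ≠ 0) (h : ∀ i, pderiv i p = 0) : p = 0 := by
  have euler := hp.sum_X_mul_pderiv
  simp only [h, mul_zero, Finset.sum_const_zero, ← Nat.cast_smul_eq_nsmul K] at euler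
  exact (smul_eq_zero.mp euler.symm).resolve_left (Nat.cast_ne_zero.mpr hn)

lemma mem_span_pow_of_forall_orthDeriv_eq_zero (hv : v ≠ 0) {d : ℕ} (hp : p.IsHomogeneous d)
    (h : ∀ i j, orthDeriv v i j p = 0) : p ∈ K ∙ linearForm v ^ d := by
  induction d generalizing p with
  | zero =>
    rw [totalDegree_eq_zero_iff_eq_C.mp ((totalDegree_zero_iff_isHomogeneous σ).mpr hp)]
    exact Submodule.mem_span_singleton.mpr ⟨coeff 0 p, by simp [smul_eq_C_mul]⟩
  | succ d ih =>
    obtain ⟨k, hk⟩ := Function.ne_iff.mp hv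
    have hpk : pderiv k p ∈ K ∙ linearForm v ^ d :=
      ih hp.pderiv fun i j => by rw [← pderiv_orthDeriv, h, map_zero]
    obtain ⟨a, ha⟩ := Submodule.mem_span_singleton.mp hpk
    have hunit : ((d + 1 : ℕ) * v k : K) ≠ 0 := mul_ne_zero (Nat.cast_ne_zero.mpr d.succ_ne_zero) hk
    refine Submodule.mem_span_singleton.mpr ⟨((d + 1 : ℕ) * v k)⁻¹ * a, ?_⟩
    rw [eq_inv_smul_iff₀ hunit |>.mpr (hp.smul_eq_linearForm_mul_pderiv fun i => h i k), ← ha,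
      mul_smul, mul_smul_comm, pow_succ']

lemma mem_span_pow_succ_of_forall_pderiv_mem (hv : v ≠ 0) {d : ℕ} (hd : d ≠ 0)
    (hp : p.IsHomogeneous (d + 1)) (h : ∀ i, pderiv i p ∈ K ∙ linearForm v ^ d) :
    p ∈ K ∙ linearForm v ^ (d + 1) :=
  mem_span_pow_of_forall_orthDeriv_eq_zero hv hp fun i j =>
    (hp.orthDeriv i j).eq_zero_of_forall_pderiv_eq_zero hd fun k => by
      rw [pderiv_orthDeriv, orthDeriv_eq_zero_of_mem_span i j (h k)]

end MvPolynomial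

section Contract

variable {m : ℕ}

lemma foldl_iterate_pderiv_comm (α : Fin m →₀ ℕ) (i : Fin m) (n : ℕ) (l : List (Fin m))
    (T : MvPolynomial (Fin m) ℂ) :
    l.foldl (fun p j => (fun q => pderiv j q)^[α j] p) ((pderiv i)^[n] T) =
      (pderiv i)^[n] (l.foldl (fun p j => (fun q => pderiv j q)^[α j] p) T) := by
  induction l generalizing T with
  | nil => rfl
  | cons k l ih =>
    rw [List.foldl_cons, List.foldl_cons, ← ih,
      (Function.Commute.iterate_iterate (fun p => pderiv_comm k i p) (α k) n).eq]

lemma foldl_iterate_pderiv_add_single (α : Fin m →₀ ℕ) (i : Fin m) (l : List (Fin m))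
    (T : MvPolynomial (Fin m) ℂ) :
    l.foldl (fun p j => (fun q => pderiv j q)^[(α + Finsupp.single i 1 : Fin m →₀ ℕ) j] p) T =
      (pderiv i)^[l.count i] (l.foldl (fun p j => (fun q => pderiv j q)^[α j] p) T) := by
  induction l generalizing T with
  | nil => rfl
  | cons j l ih =>
    rcases eq_or_ne j i with rfl | hji
    · rw [List.foldl_cons, ih, List.foldl_cons, List.count_cons_self, Finsupp.add_apply,
        Finsupp.single_eq_same, Function.iterate_succ_apply']
      have := foldl_iterate_pderiv_comm α j 1 l ((fun q => pderiv j q)^[α j] T)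
      rw [Function.iterate_one] at this
      rw [this, Function.iterate_succ_apply]
    · rw [List.foldl_cons, ih, List.foldl_cons, List.count_cons_of_ne hji, Finsupp.add_apply,
        Finsupp.single_eq_of_ne hji, add_zero]

lemma monomialDeriv_zero (T : MvPolynomial (Fin m) ℂ) : monomialDeriv 0 T = T := by
  simp [monomialDeriv]

lemma monomialDeriv_add_single (α : Fin m →₀ ℕ) (i : Fin m) (T : MvPolynomial (Fin m) ℂ) :
    monomialDeriv (α + Finsupp.single i 1) T = pderiv i (monomialDeriv α T) := by
  rw [monomialDeriv, foldl_iterate_pderiv_add_single,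
    List.count_eq_one_of_mem (List.nodup_finRange m) (List.mem_finRange i)]
  rfl

lemma contract_monomial (d : Fin m →₀ ℕ) (c : ℂ) (T : MvPolynomial (Fin m) ℂ) :
    contract (monomial d c) T = c • monomialDeriv d T := by
  rcases eq_or_ne c 0 with rfl | hc
  · simp [contract]
  · rw [contract, support_monomial, if_neg hc, Finset.sum_singleton, coeff_monomial, if_pos rfl]

lemma contract_zero (T : MvPolynomial (Fin m) ℂ) : contract 0 T = 0 := by
  simp [contract]

lemma contract_neg (Q T : MvPolynomial (Fin m) ℂ) : contract (-Q) T = -contract Q T := by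
  simp [contract, support_neg]

lemma contract_X (i : Fin m) (T : MvPolynomial (Fin m) ℂ) : contract (X i) T = pderiv i T := by
  rw [X, contract_monomial, one_smul, ← zero_add (Finsupp.single i 1), monomialDeriv_add_single,
    monomialDeriv_zero]

lemma contract_X_mul_X (i j : Fin m) (T : MvPolynomial (Fin m) ℂ) :
    contract (X i * X j) T = pderiv j (pderiv i T) := by
  rw [X, X, monomial_mul, one_mul, contract_monomial, one_smul, monomialDeriv_add_single,
    ← zero_add (Finsupp.single i 1), monomialDeriv_add_single, monomialDeriv_zero]

end Contract

/-- `(ℓ, q) ↦ ℓ⌟Q + q⌟C` maps the hyperplane `ℓ(e₀) + ⟨q, e₁e₂⟩ = 0` into the line `ℂ v`. -/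
def ContractsIntoLine (v : Fin 3 → ℂ) (Q C : MvPolynomial (Fin 3) ℂ) : Prop :=
  ∀ ℓ q : MvPolynomial (Fin 3) ℂ, ℓ.IsHomogeneous 1 → q.IsHomogeneous 2 →
    contract ℓ (X 0) + contract q (X 1 * X 2) = 0 →
    contract ℓ Q + contract q C ∈ ℂ ∙ linearForm v ^ 1

namespace ContractsIntoLine

variable {v : Fin 3 → ℂ} {Q C : MvPolynomial (Fin 3) ℂ}

lemma pderiv_mem (h : ContractsIntoLine v Q C) {i : Fin 3} (hi : i ≠ 0) :
    pderiv i Q ∈ ℂ ∙ linearForm v ^ 1 := by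
  simpa [contract_X, contract_zero] using
    h (X i) 0 (isHomogeneous_X _ _) (isHomogeneous_zero _ _ _)
      (by simp [contract_X, contract_zero, pderiv_X_of_ne hi.symm])

lemma pderiv_pderiv_mem (h : ContractsIntoLine v Q C) {i j : Fin 3}
    (hij : pderiv j (pderiv i (X 1 * X 2 : MvPolynomial (Fin 3) ℂ)) = 0) :
    pderiv j (pderiv i C) ∈ ℂ ∙ linearForm v ^ 1 := by
  simpa [contract_X_mul_X, contract_zero] using
    h 0 (X i * X j) (isHomogeneous_zero _ _ _) ((isHomogeneous_X _ _).mul (isHomogeneous_X _ _))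
      (by rw [contract_zero, zero_add, contract_X_mul_X, hij])

lemma pderiv_sub_pderiv_pderiv_mem (h : ContractsIntoLine v Q C) :
    pderiv 0 Q - pderiv 2 (pderiv 1 C) ∈ ℂ ∙ linearForm v ^ 1 := by
  simpa [contract_X, contract_X_mul_X, contract_neg, sub_eq_add_neg] using
    h (X 0) (-(X 1 * X 2)) (isHomogeneous_X _ _)
      ((isHomogeneous_X _ _).mul (isHomogeneous_X _ _)).neg
      (by simp [contract_X, contract_X_mul_X, contract_neg, pderiv_X])

/-- `C` alone does not force this (take `v = e₁`, `C = x₁x₂²`): the direction `orthDeriv v 1 2` is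
controlled through `∂₀Q`. -/
lemma pderiv_two_pderiv_one_mem (hv : v ≠ 0) (hC : C.IsHomogeneous 3)
    (h : ContractsIntoLine v Q C) : pderiv 2 (pderiv 1 C) ∈ ℂ ∙ linearForm v ^ 1 := by
  have hC_mem (i j : Fin 3) (hij : pderiv j (pderiv i (X 1 * X 2 : MvPolynomial (Fin 3) ℂ)) = 0)
      (k l : Fin 3) : orthDeriv v k l (pderiv j (pderiv i C)) = 0 :=
    orthDeriv_eq_zero_of_mem_span k l (h.pderiv_pderiv_mem hij)
  have h01 : orthDeriv v 0 1 (pderiv 2 (pderiv 1 C)) = 0 := by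
    rw [orthDeriv_pderiv, pderiv_orthDeriv, hC_mem 1 0 (by simp [pderiv_X]),
      hC_mem 1 1 (by simp [pderiv_X]), add_zero]
  have h02 : orthDeriv v 0 2 (pderiv 2 (pderiv 1 C)) = 0 := by
    rw [pderiv_comm, orthDeriv_pderiv, pderiv_orthDeriv, hC_mem 2 0 (by simp [pderiv_X]),
      hC_mem 2 2 (by simp [pderiv_X]), add_zero]
  have h12 : orthDeriv v 1 2 (pderiv 2 (pderiv 1 C)) = 0 := by
    have hmix := orthDeriv_eq_zero_of_mem_span 1 2 h.pderiv_sub_pderiv_pderiv_mem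
    rw [map_sub, sub_eq_zero] at hmix
    rw [← hmix, orthDeriv_pderiv, pderiv_orthDeriv,
      orthDeriv_eq_zero_of_mem_span _ _ (h.pderiv_mem (i := 1) (by decide)),
      orthDeriv_eq_zero_of_mem_span _ _ (h.pderiv_mem (i := 2) (by decide)), add_zero]
  refine mem_span_pow_of_forall_orthDeriv_eq_zero hv hC.pderiv.pderiv
    (forall_orthDeriv_eq_zero_of_lt fun i j hij => ?_)
  fin_cases i <;> fin_cases j <;> try exact absurd hij (by decide)
  exacts [h01, h02, h12]

lemma forall_pderiv_pderiv_mem (hv : v ≠ 0) (hC : C.IsHomogeneous 3)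
    (h : ContractsIntoLine v Q C) (i j : Fin 3) :
    pderiv j (pderiv i C) ∈ ℂ ∙ linearForm v ^ 1 := by
  by_cases hij : pderiv j (pderiv i (X 1 * X 2 : MvPolynomial (Fin 3) ℂ)) = 0
  · exact h.pderiv_pderiv_mem hij
  · obtain ⟨rfl, rfl⟩ | ⟨rfl, rfl⟩ : (i = 1 ∧ j = 2) ∨ (i = 2 ∧ j = 1) := by
      fin_cases i <;> fin_cases j <;> simp_all [pderiv_X]
    · exact h.pderiv_two_pderiv_one_mem hv hC
    · rw [pderiv_comm]
      exact h.pderiv_two_pderiv_one_mem hv hC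

lemma forall_pderiv_mem (hv : v ≠ 0) (hC : C.IsHomogeneous 3) (h : ContractsIntoLine v Q C)
    (i : Fin 3) : pderiv i Q ∈ ℂ ∙ linearForm v ^ 1 := by
  rcases eq_or_ne i 0 with rfl | hi
  · simpa using add_mem h.pderiv_sub_pderiv_pderiv_mem (h.pderiv_two_pderiv_one_mem hv hC)
  · exact h.pderiv_mem hi

end ContractsIntoLine

theorem stmt18 (v : Fin 3 → ℂ) (hv : v ≠ 0)
    (Q C : MvPolynomial (Fin 3) ℂ) (hQ : Q.IsHomogeneous 2) (hC : C.IsHomogeneous 3)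
    (h : ∀ ℓ q : MvPolynomial (Fin 3) ℂ, ℓ.IsHomogeneous 1 → q.IsHomogeneous 2 →
      contract ℓ (X 0) + contract q (X 1 * X 2) = 0 →
      ∃ a : ℂ, contract ℓ Q + contract q C =
        a • (∑ i, v i • (X i : MvPolynomial (Fin 3) ℂ))) :
    (∃ a : ℂ, Q = a • (∑ i, v i • (X i : MvPolynomial (Fin 3) ℂ)) ^ 2) ∧
    (∃ b : ℂ, C = b • (∑ i, v i • (X i : MvPolynomial (Fin 3) ℂ)) ^ 3) := by
  have h' : ContractsIntoLine v Q C := fun ℓ q hℓ hq h₀ => by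
    obtain ⟨a, ha⟩ := h ℓ q hℓ hq h₀
    exact Submodule.mem_span_singleton.mpr ⟨a, by rw [ha, pow_one]; rfl⟩
  have hC_pderiv (i : Fin 3) : pderiv i C ∈ ℂ ∙ linearForm v ^ 2 :=
    mem_span_pow_succ_of_forall_pderiv_mem hv one_ne_zero hC.pderiv
      (h'.forall_pderiv_pderiv_mem hv hC i)
  obtain ⟨a, ha⟩ := Submodule.mem_span_singleton.mp
    (mem_span_pow_succ_of_forall_pderiv_mem hv one_ne_zero hQ (h'.forall_pderiv_mem hv hC))
  obtain ⟨b, hb⟩ := Submodule.mem_span_singleton.mp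
    (mem_span_pow_succ_of_forall_pderiv_mem hv two_ne_zero hC hC_pderiv)
  exact ⟨⟨a, ha.symm⟩, ⟨b, hb.symm⟩⟩
end
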